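/- Let d be a positive integer and (λ_n)_{n≥1} a nondecreasing sequence of positive real numbers with λ_n/n^{2/d} → L as n → ∞ for some L > 0; set ρ_n = √λ_n and Θ_D(t) = Σ_{n≥1} e^{−ρ_n t}. Then for every integer m ≥ d + 1, every θ ∈ (−π/2, π/2), and every ρ ∈ ℂ with Re(ρ e^{iθ}) > 0, the improper integral ∫_0^{e^{iθ}∞} (−t)^{m−1} Θ_D(t) e^{−ρ t} dt over the ray {r e^{iθ} : r > 0} converges absolutely and equals Σ_{n≥1} (−1)^{m−1} (m−1)! / (ρ + ρ_n)^{m}, the series on the right converging absolutely. -/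

import Mathlib

open Filter MeasureTheory Set
open scoped Topology Real

/-- The point `r e^{iθ}` of the ray of direction `θ`. -/
noncomputable def rayPt (θ r : ℝ) : ℂ := (r : ℂ) * Complex.exp ((θ : ℂ) * Complex.I)

/-- The unit direction `e^{iθ}`. -/
noncomputable def rayDir (θ : ℝ) : ℂ := Complex.exp ((θ : ℂ) * Complex.I)

/-!
Along the ray `t = r e^{iθ}` the `n`-th term of `Θ_D` contributes the Gamma-type integral
`∫_0^∞ r^k e^{-s_n r} dr = k! / s_n^{k+1}`, `s_n = (ρ + ρ_n) e^{iθ}` (integration by parts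
in `k`), whose absolute value integrates to `k! / (Re s_n)^{k+1}`. Since `Re s_n ≥ ρ_n cos θ`
and the Weyl asymptotics give `ρ_n ≳ n^{1/d}`, these absolute integrals are summable as soon
as `k + 1 > d`, so the series can be integrated term by term.
-/

open scoped Nat

theorem MeasureTheory.integrable_tsum_of_summable_integral_norm {α E : Type*}
    [MeasurableSpace α] {μ : Measure α} [NormedAddCommGroup E] [CompleteSpace E]
    {ι : Type*} [Countable ι] {F : ι → α → E}
    (hF_int : ∀ i, Integrable (F i) μ) (hF_sum : Summable fun i ↦ ∫ a, ‖F i a‖ ∂μ) :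
    Integrable (fun a ↦ ∑' i, F i a) μ := by
  set G : ι → α →₁[μ] E := fun i ↦ (hF_int i).toL1 (F i)
  have hG : ∑' i, ‖G i‖ₑ ≠ ⊤ := by
    refine tsum_enorm_ne_top_iff_summable_norm.2 (hF_sum.congr fun i ↦ ?_)
    exact (L1.norm_of_fun_eq_integral_norm (hF_int i)).symm
  refine (L1.integrable_coeFn (∑' i, G i)).congr ?_
  filter_upwards [Lp.coeFn_tsum hG, ae_all_iff.2 fun i ↦ (hF_int i).coeFn_toL1] with a hsum hG
  rw [hsum]
  exact tsum_congr hG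

lemma norm_ofReal_pow_mul_cexp_neg_mul (k : ℕ) (s : ℂ) {r : ℝ} (hr : 0 ≤ r) :
    ‖(r : ℂ) ^ k * Complex.exp (-(s * r))‖ = r ^ k * Real.exp (-(s.re * r)) := by
  simp [Complex.norm_exp, abs_of_nonneg hr]

lemma integrableOn_pow_mul_exp_neg_mul_Ioi (k : ℕ) {b : ℝ} (hb : 0 < b) :
    IntegrableOn (fun r : ℝ ↦ r ^ k * Real.exp (-(b * r))) (Ioi 0) := by
  simpa [neg_mul] using integrableOn_rpow_mul_exp_neg_mul_rpow (s := k) (p := 1)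
    (by linarith [k.cast_nonneg (α := ℝ)]) one_pos hb

lemma integrableOn_ofReal_pow_mul_cexp_neg_mul_Ioi (k : ℕ) {s : ℂ} (hs : 0 < s.re) :
    IntegrableOn (fun r : ℝ ↦ (r : ℂ) ^ k * Complex.exp (-(s * r))) (Ioi 0) :=
  (integrableOn_pow_mul_exp_neg_mul_Ioi k hs).mono'
    (by fun_prop : Continuous _).aestronglyMeasurable
    (ae_restrict_of_forall_mem measurableSet_Ioi fun _ hr ↦
      (norm_ofReal_pow_mul_cexp_neg_mul k s (le_of_lt hr)).le)

lemma tendsto_ofReal_pow_mul_cexp_neg_mul_atTop (k : ℕ) {s : ℂ} (hs : 0 < s.re) :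
    Tendsto (fun r : ℝ ↦ (r : ℂ) ^ k * Complex.exp (-(s * r))) atTop (𝓝 0) := by
  rw [tendsto_zero_iff_norm_tendsto_zero]
  refine (tendsto_rpow_mul_exp_neg_mul_atTop_nhds_zero k s.re hs).congr' ?_
  filter_upwards [eventually_ge_atTop 0] with r hr
  rw [norm_ofReal_pow_mul_cexp_neg_mul k s hr, Real.rpow_natCast, neg_mul]

lemma integral_ofReal_pow_mul_cexp_neg_mul_Ioi (k : ℕ) {s : ℂ} (hs : 0 < s.re) :
    ∫ r in Ioi (0 : ℝ), (r : ℂ) ^ k * Complex.exp (-(s * r)) = k ! / s ^ (k + 1) := by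
  have hs0 : s ≠ 0 := by rintro rfl; simp at hs
  induction k with
  | zero => simpa [neg_mul] using integral_exp_mul_complex_Ioi (a := -s) (by simpa) 0
  | succ k ih =>
    have hexp (r : ℝ) : HasDerivAt (fun r : ℝ ↦ -Complex.exp (-(s * r)) / s)
        (Complex.exp (-(s * r))) r := by
      have := ((((hasDerivAt_id (r : ℂ)).const_mul s).neg.cexp).neg.div_const s).comp_ofReal
      convert this using 1
      · ext; simp [neg_div]
      · simp; field_simp
    have hpow (r : ℝ) :
        HasDerivAt (fun r : ℝ ↦ (r : ℂ) ^ (k + 1)) ((k + 1) * (r : ℂ) ^ k) r := by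
      simpa using (hasDerivAt_pow (k + 1) (r : ℂ)).comp_ofReal
    have huv :
        (fun r : ℝ ↦ (r : ℂ) ^ (k + 1)) * (fun r : ℝ ↦ -Complex.exp (-(s * r)) / s) =
          fun r : ℝ ↦ -s⁻¹ * ((r : ℂ) ^ (k + 1) * Complex.exp (-(s * r))) := by
      ext r; simp only [Pi.mul_apply]; ring
    have hu'v (r : ℝ) : (k + 1) * (r : ℂ) ^ k * (-Complex.exp (-(s * r)) / s) =
        -((k + 1) / s) * ((r : ℂ) ^ k * Complex.exp (-(s * r))) := by
      ring
    have hparts := integral_Ioi_mul_deriv_eq_deriv_mul (a' := 0) (b' := 0)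
      (fun r _ ↦ hpow r) (fun r _ ↦ hexp r)
      (integrableOn_ofReal_pow_mul_cexp_neg_mul_Ioi (k + 1) hs)
      (IntegrableOn.congr_fun ((integrableOn_ofReal_pow_mul_cexp_neg_mul_Ioi k hs).const_mul _)
        (fun r _ ↦ (hu'v r).symm) measurableSet_Ioi)
      (by
        rw [huv]
        exact ((by fun_prop : Continuous _).tendsto' 0 0 (by simp)).mono_left nhdsWithin_le_nhds)
      (by simpa [huv] using
        (tendsto_ofReal_pow_mul_cexp_neg_mul_atTop (k + 1) hs).const_mul (-s⁻¹))
    simp only [hu'v, integral_const_mul, ih] at hparts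
    rw [hparts, Nat.factorial_succ]
    push_cast
    field_simp
    ring

lemma integral_pow_mul_exp_neg_mul_Ioi (k : ℕ) {b : ℝ} (hb : 0 < b) :
    ∫ r in Ioi (0 : ℝ), r ^ k * Real.exp (-(b * r)) = k ! / b ^ (k + 1) := by
  apply Complex.ofReal_injective
  rw [← integral_complex_ofReal]
  push_cast
  exact integral_ofReal_pow_mul_cexp_neg_mul_Ioi k (s := b) (by simpa)

lemma summable_inv_pow_of_eventually_rpow_le {x : ℕ → ℝ} {c e : ℝ} {m : ℕ} (hc : 0 < c)
    (hem : 1 < e * m) (hx : ∀ᶠ n : ℕ in atTop, c * ((n : ℝ) + 1) ^ e ≤ x n) :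
    Summable (fun n ↦ (x n ^ m)⁻¹) := by
  have hp : Summable (fun n : ℕ ↦ (c ^ m)⁻¹ * (((n : ℝ) + 1) ^ (e * m))⁻¹) := by
    refine Summable.mul_left _ ?_
    simpa using (summable_nat_add_iff 1).2 (Real.summable_nat_rpow_inv.2 hem)
  refine hp.of_norm_bounded_eventually_nat ?_
  filter_upwards [hx] with n hn
  have hpos : 0 < c * ((n : ℝ) + 1) ^ e := by positivity
  calc ‖(x n ^ m)⁻¹‖ = (x n ^ m)⁻¹ := by
        rw [Real.norm_of_nonneg (inv_nonneg.2 (pow_nonneg (hpos.le.trans hn) m))]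
    _ ≤ ((c * ((n : ℝ) + 1) ^ e) ^ m)⁻¹ := by gcongr
    _ = (c ^ m)⁻¹ * (((n : ℝ) + 1) ^ (e * m))⁻¹ := by
        rw [mul_pow, mul_inv, Real.rpow_mul (by positivity), Real.rpow_natCast]

lemma eventually_rpow_le_sqrt_of_tendsto_div_rpow {d : ℕ} {lam : ℕ → ℝ} {L : ℝ}
    (hL : 0 < L)
    (hweyl : Tendsto (fun n : ℕ ↦ lam n / ((n : ℝ) + 1) ^ ((2 : ℝ) / d)) atTop (𝓝 L)) :
    ∀ᶠ n : ℕ in atTop, √(L / 2) * ((n : ℝ) + 1) ^ ((1 : ℝ) / d) ≤ √(lam n) := by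
  filter_upwards [hweyl.eventually (lt_mem_nhds (half_lt_self hL))] with n hn
  have hpos : (0 : ℝ) < (n : ℝ) + 1 := by positivity
  rw [lt_div_iff₀ (by positivity)] at hn
  refine Real.le_sqrt_of_sq_le ?_
  rw [mul_pow, Real.sq_sqrt (by positivity), ← Real.rpow_natCast, ← Real.rpow_mul hpos.le]
  calc _ = L / 2 * ((n : ℝ) + 1) ^ ((2 : ℝ) / d) := by congr 2; push_cast; ring
    _ ≤ lam n := hn.le

lemma summable_inv_add_sqrt_mul_pow {d : ℕ} (hd : 0 < d) {lam : ℕ → ℝ} {L : ℝ}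
    (hL : 0 < L)
    (hweyl : Tendsto (fun n : ℕ ↦ lam n / ((n : ℝ) + 1) ^ ((2 : ℝ) / d)) atTop (𝓝 L))
    {m : ℕ} (hm : d < m) {a c : ℝ} (ha : 0 ≤ a) (hc : 0 < c) :
    Summable fun n ↦ ((a + √(lam n) * c) ^ m)⁻¹ := by
  refine summable_inv_pow_of_eventually_rpow_le (c := c * √(L / 2)) (e := 1 / d)
    (by positivity) ?_ ?_
  · rw [one_div_mul_eq_div, one_lt_div (by positivity)]
    exact_mod_cast hm
  · filter_upwards [eventually_rpow_le_sqrt_of_tendsto_div_rpow hL hweyl] with n hn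
    nlinarith [mul_le_mul_of_nonneg_left hn hc.le]

lemma norm_rayDir (θ : ℝ) : ‖rayDir θ‖ = 1 := Complex.norm_exp_ofReal_mul_I θ

lemma re_add_ofReal_mul_rayDir (θ : ℝ) (s : ℂ) (x : ℝ) :
    ((s + x) * rayDir θ).re = (s * rayDir θ).re + x * Real.cos θ := by
  simp [add_mul, rayDir, Complex.exp_ofReal_mul_I_re]

/-- The integrand of `∫_0^{e^{iθ}∞} (-t)^k e^{-st} dt` in the parametrisation
`t = r e^{iθ}`, `dt = e^{iθ} dr`. -/
noncomputable def rayIntegrand (θ : ℝ) (k : ℕ) (s : ℂ) (r : ℝ) : ℂ :=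
  (-(rayPt θ r)) ^ k * Complex.exp (-s * rayPt θ r) * rayDir θ

lemma rayIntegrand_eq (θ : ℝ) (k : ℕ) (s : ℂ) (r : ℝ) :
    rayIntegrand θ k s r =
      (-1) ^ k * rayDir θ ^ (k + 1) * ((r : ℂ) ^ k * Complex.exp (-(s * rayDir θ * r))) := by
  rw [rayIntegrand, show rayPt θ r = r * rayDir θ from rfl]
  ring_nf

section RayIntegrand

variable {θ : ℝ} {s : ℂ}

lemma integrableOn_rayIntegrand (hs : 0 < (s * rayDir θ).re) (k : ℕ) :
    IntegrableOn (rayIntegrand θ k s) (Ioi 0) := by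
  simp_rw [funext (rayIntegrand_eq θ k s)]
  exact (integrableOn_ofReal_pow_mul_cexp_neg_mul_Ioi k hs).const_mul _

lemma integral_norm_rayIntegrand (hs : 0 < (s * rayDir θ).re) (k : ℕ) :
    ∫ r in Ioi (0 : ℝ), ‖rayIntegrand θ k s r‖ =
      k ! * ((s * rayDir θ).re ^ (k + 1))⁻¹ := by
  rw [← div_eq_mul_inv, ← integral_pow_mul_exp_neg_mul_Ioi k hs]
  refine setIntegral_congr_fun measurableSet_Ioi fun r hr ↦ ?_
  rw [rayIntegrand_eq, norm_mul, norm_ofReal_pow_mul_cexp_neg_mul k _ (le_of_lt hr)]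
  simp [norm_rayDir]

lemma integral_rayIntegrand (hs : 0 < (s * rayDir θ).re) (k : ℕ) :
    ∫ r in Ioi (0 : ℝ), rayIntegrand θ k s r = (-1 : ℂ) ^ k * (k ! : ℂ) / s ^ (k + 1) := by
  have hdir : rayDir θ ≠ 0 := Complex.exp_ne_zero _
  have hs0 : s ≠ 0 := by rintro rfl; simp at hs
  simp_rw [rayIntegrand_eq, integral_const_mul, integral_ofReal_pow_mul_cexp_neg_mul_Ioi k hs]
  field_simp
  ring

end RayIntegrand

theorem stmt_5_general (d : ℕ) (hd : 0 < d) (lam : ℕ → ℝ)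
    (L : ℝ) (hL : 0 < L)
    (hweyl : Tendsto (fun n : ℕ => lam n / (((n : ℝ) + 1) ^ ((2 : ℝ) / (d : ℝ))))
      atTop (𝓝 L))
    (m : ℕ) (hm : d + 1 ≤ m)
    (θ : ℝ) (hθ : θ ∈ Set.Ioo (-(π / 2)) (π / 2))
    (ρ : ℂ) (hρ : 0 < (ρ * rayDir θ).re) :
    IntegrableOn
      (fun r : ℝ =>
        (-(rayPt θ r)) ^ (m - 1) *
          (∑' n : ℕ, Complex.exp (-(Real.sqrt (lam n) : ℂ) * rayPt θ r)) *
          Complex.exp (-ρ * rayPt θ r) * rayDir θ)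
      (Set.Ioi 0) ∧
    Summable (fun n : ℕ =>
      ‖(-1 : ℂ) ^ (m - 1) * (Nat.factorial (m - 1) : ℂ) /
        (ρ + (Real.sqrt (lam n) : ℂ)) ^ m‖) ∧
    (∫ r in Set.Ioi (0 : ℝ),
        (-(rayPt θ r)) ^ (m - 1) *
          (∑' n : ℕ, Complex.exp (-(Real.sqrt (lam n) : ℂ) * rayPt θ r)) *
          Complex.exp (-ρ * rayPt θ r) * rayDir θ)
      = ∑' n : ℕ,
          (-1 : ℂ) ^ (m - 1) * (Nat.factorial (m - 1) : ℂ) /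
            (ρ + (Real.sqrt (lam n) : ℂ)) ^ m := by
  obtain ⟨k, rfl⟩ : ∃ k, m = k + 1 := ⟨m - 1, by omega⟩
  simp only [Nat.add_sub_cancel]
  set F : ℕ → ℝ → ℂ := fun n ↦ rayIntegrand θ k (ρ + √(lam n))
  have hF : (fun r : ℝ ↦ (-(rayPt θ r)) ^ k *
      (∑' n : ℕ, Complex.exp (-(√(lam n) : ℂ) * rayPt θ r)) *
      Complex.exp (-ρ * rayPt θ r) * rayDir θ) = fun r ↦ ∑' n, F n r := by
    ext r
    simp only [F, rayIntegrand, neg_add, add_mul, Complex.exp_add, ← tsum_mul_left,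
      ← tsum_mul_right]
    exact tsum_congr fun n ↦ by ring
  have hcos : 0 < Real.cos θ := Real.cos_pos_of_mem_Ioo hθ
  have hre n : 0 < ((ρ + √(lam n)) * rayDir θ).re := by
    rw [re_add_ofReal_mul_rayDir]; positivity
  have hF_int n : IntegrableOn (F n) (Ioi 0) := integrableOn_rayIntegrand (hre n) k
  have hF_sum : Summable fun n ↦ ∫ r in Ioi (0 : ℝ), ‖F n r‖ := by
    simp only [F, integral_norm_rayIntegrand (hre _), re_add_ofReal_mul_rayDir]
    exact (summable_inv_add_sqrt_mul_pow hd hL hweyl hm hρ.le hcos).mul_left _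
  refine ⟨?_, hF_sum.of_nonneg_of_le (fun _ ↦ norm_nonneg _) fun n ↦ ?_, ?_⟩
  · rw [hF]
    exact integrable_tsum_of_summable_integral_norm hF_int hF_sum
  · rw [← integral_rayIntegrand (hre n)]
    exact norm_integral_le_integral_norm _
  · rw [hF, ← integral_tsum_of_summable_integral_norm hF_int hF_sum]
    exact tsum_congr fun n ↦ integral_rayIntegrand (hre n) k

/-- With `ρ_n = √λ_n`, for `m ≥ d + 1`, `θ ∈ (-π/2, π/2)` and
`Re(ρ e^{iθ}) > 0`, the Laplace integral of `(-t)^{m-1} Θ_D(t)` along the ray of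
direction `θ` converges absolutely and equals
`Σ_{n≥1} (-1)^{m-1} (m-1)! / (ρ + ρ_n)^m`, the series converging absolutely. -/
theorem stmt_5 (d : ℕ) (hd : 0 < d) (lam : ℕ → ℝ) (hpos : ∀ n, 0 < lam n)
    (hmono : Monotone lam) (L : ℝ) (hL : 0 < L)
    (hweyl : Tendsto (fun n : ℕ => lam n / (((n : ℝ) + 1) ^ ((2 : ℝ) / (d : ℝ))))
      atTop (𝓝 L))
    (m : ℕ) (hm : d + 1 ≤ m)
    (θ : ℝ) (hθ : θ ∈ Set.Ioo (-(π / 2)) (π / 2))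
    (ρ : ℂ) (hρ : 0 < (ρ * rayDir θ).re) :
    IntegrableOn
      (fun r : ℝ =>
        (-(rayPt θ r)) ^ (m - 1) *
          (∑' n : ℕ, Complex.exp (-(Real.sqrt (lam n) : ℂ) * rayPt θ r)) *
          Complex.exp (-ρ * rayPt θ r) * rayDir θ)
      (Set.Ioi 0) ∧
    Summable (fun n : ℕ =>
      ‖(-1 : ℂ) ^ (m - 1) * (Nat.factorial (m - 1) : ℂ) /
        (ρ + (Real.sqrt (lam n) : ℂ)) ^ m‖) ∧
    (∫ r in Set.Ioi (0 : ℝ),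
        (-(rayPt θ r)) ^ (m - 1) *
          (∑' n : ℕ, Complex.exp (-(Real.sqrt (lam n) : ℂ) * rayPt θ r)) *
          Complex.exp (-ρ * rayPt θ r) * rayDir θ)
      = ∑' n : ℕ,
          (-1 : ℂ) ^ (m - 1) * (Nat.factorial (m - 1) : ℂ) /
            (ρ + (Real.sqrt (lam n) : ℂ)) ^ m :=
  stmt_5_general d hd lam L hL hweyl m hm θ hθ ρ hρ
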